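/- arXiv:1907.04093 — 5 statements merged into one kernel-verified Lean document; each statement's English description precedes it below -/
import Mathlib

section
/- Let k be a field of characteristic p > 0 and A any associative k-algebra. If f : A → A is a derivation, then the p-fold composite f^p = f ∘ ⋯ ∘ f (p times) is again a derivation on A. -/
open Finset Nat

private lemma iter_leibniz {k A : Type*} [Field k] [Ring A] [Algebra k A]
    (f : Module.End k A) (hf : ∀ a b : A, f (a * b) = f a * b + a * f b)
    (n : ℕ) (a b : A) :
    (f ^ n) (a * b) = ∑ ij ∈ antidiagonal n, n.choose ij.1 • ((f ^ ij.1) a * (f ^ ij.2) b) := by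
  induction n with
  | zero => simp
  | succ n ih =>
    rw [sum_antidiagonal_choose_succ_nsmul (M := A) (fun i j => (f ^ i) a * (f ^ j) b) n]
    have h1 : (f ^ (n + 1)) (a * b) = f ((f ^ n) (a * b)) := by
      rw [pow_succ, Module.End.mul_apply, ← Module.End.mul_apply, ← Module.End.mul_apply, pow_mul_comm']
    rw [h1, ih, map_sum]
    have h2 : ∀ (m : ℕ) (x : A), f ((f ^ m) x) = (f ^ (m+1)) x := by
      intro m x; rw [pow_succ, Module.End.mul_apply, ← Module.End.mul_apply, ← Module.End.mul_apply, pow_mul_comm']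
    simp only [map_nsmul, hf, smul_add, sum_add_distrib, h2]
    rw [add_comm]
    congr 1
    refine sum_congr rfl fun ⟨i, j⟩ hij ↦ ?_
    have hij' := (mem_antidiagonal.1 hij).symm
    rw [n.choose_symm_of_eq_add hij']

/-- In characteristic `p > 0`, the `p`-fold composite of a derivation on an
associative `k`-algebra is again a derivation. -/
theorem stmt4 (k A : Type*) (p : ℕ) [Field k] [Fact p.Prime] [CharP k p]
    [Ring A] [Algebra k A] (f : Module.End k A)
    (hf : ∀ a b : A, f (a * b) = f a * b + a * f b) :
    ∀ a b : A, (f ^ p) (a * b) = (f ^ p) a * b + a * (f ^ p) b := by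
  have hp : p.Prime := Fact.out
  have hpA : ∀ x : A, p • x = 0 := by
    intro x
    rw [← Nat.cast_smul_eq_nsmul k, CharP.cast_eq_zero, zero_smul]
  intro a b
  rw [iter_leibniz f hf p a b,
    sum_antidiagonal_eq_sum_range_succ (fun i j ↦ p.choose i • ((f ^ i) a * (f ^ j) b)) p]
  rw [Finset.sum_range_succ, Finset.sum_eq_single 0]
  · simp only [Nat.choose_zero_right, one_smul, pow_zero, Module.End.one_apply,
      Nat.choose_self, Nat.sub_zero, Nat.sub_self, one_mul, mul_one]
    exact add_comm _ _
  · intro i hi hi0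
    have hilt : i < p := by simpa using Finset.mem_range.1 hi
    obtain ⟨m, hm⟩ := (Nat.Prime.dvd_choose_self hp hi0 hilt)
    rw [hm, mul_smul, hpA]
  · intro h; exact absurd (Finset.mem_range.2 hp.pos) h
end

section
/- Let k be an algebraically closed field of characteristic p ≥ 3 and W₁ = Der(k[X]/(X^p)) the Witt algebra. Then W₁ is a simple Lie algebra. -/
set_option synthInstance.maxHeartbeats 1000000
set_option maxHeartbeats 1000000

open Polynomial

section Witt
variable (k : Type*) [Field k] (p : ℕ)

noncomputable abbrev WittI : Ideal k[X] := Ideal.span {(X : k[X]) ^ p}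
noncomputable abbrev WA := k[X] ⧸ WittI k p
noncomputable abbrev wmk : k[X] →ₐ[k] WA k p := Ideal.Quotient.mkₐ k (WittI k p)

variable [Fact p.Prime] [CharP k p]

lemma wmk_Xp : wmk k p (X ^ p) = 0 := by
  rw [Ideal.Quotient.mkₐ_eq_mk, Ideal.Quotient.eq_zero_iff_mem]
  exact Ideal.subset_span rfl

/-- the auxiliary linear map `f ↦ a * mk (derivative f)` -/
noncomputable def wmu (a : WA k p) : k[X] →ₗ[k] WA k p :=
  a • ((Ideal.Quotient.mkₐ k (WittI k p)).toLinearMap ∘ₗ (derivative : k[X] →ₗ[k] k[X]))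

lemma wmu_apply (a : WA k p) (f : k[X]) : wmu k p a f = a * wmk k p (derivative f) := by
  simp [wmu, smul_eq_mul]

lemma wmu_ker (a : WA k p) : (WittI k p).restrictScalars k ≤ LinearMap.ker (wmu k p a) := by
  intro f hf
  rw [LinearMap.mem_ker]
  rw [Submodule.restrictScalars_mem, WittI, Ideal.mem_span_singleton] at hf
  obtain ⟨g, rfl⟩ := hf
  rw [wmu_apply]
  have : derivative ((X : k[X]) ^ p * g) = X ^ p * derivative g := by
    rw [derivative_mul, derivative_X_pow]
    simp [CharP.cast_eq_zero k p]
  rw [this, map_mul, wmk_Xp, zero_mul, mul_zero]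

end Witt

set_option linter.unusedSectionVars false

section Witt2
variable (k : Type*) [Field k] (p : ℕ) [Fact p.Prime] [CharP k p]

/-- underlying linear map -/
noncomputable def WL (a : WA k p) : WA k p →ₗ[k] WA k p :=
  (Submodule.liftQ ((WittI k p).restrictScalars k) (wmu k p a) (wmu_ker k p a)) ∘ₗ
    (Submodule.Quotient.restrictScalarsEquiv k (WittI k p)).symm.toLinearMap

lemma WL_mk (a : WA k p) (f : k[X]) :
    WL k p a (wmk k p f) = a * wmk k p (derivative f) := by
  show (Submodule.liftQ ((WittI k p).restrictScalars k) (wmu k p a) (wmu_ker k p a))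
      ((Submodule.Quotient.restrictScalarsEquiv k (WittI k p)).symm (wmk k p f)) = _
  rw [show wmk k p f = Submodule.Quotient.mk f from rfl,
    Submodule.Quotient.restrictScalarsEquiv_symm_mk, Submodule.liftQ_apply, wmu_apply]

lemma wmk_surj : Function.Surjective (wmk k p) := Ideal.Quotient.mkₐ_surjective k _

/-- The derivation `f(x) ↦ f'(x) a` on `k[X]/(X^p)`. -/
noncomputable def Wda (a : WA k p) : Derivation k (WA k p) (WA k p) where
  toLinearMap := WL k p a
  map_one_eq_zero' := by
    have h1 : (1 : WA k p) = wmk k p 1 := by simp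
    rw [h1, WL_mk]; simp
  leibniz' := by
    intro y z
    obtain ⟨f, rfl⟩ := wmk_surj k p y
    obtain ⟨g, rfl⟩ := wmk_surj k p z
    show WL k p a (wmk k p f * wmk k p g) = _ • WL k p a (wmk k p g) + _ • WL k p a (wmk k p f)
    rw [← map_mul, WL_mk, WL_mk, WL_mk, derivative_mul, map_add, map_mul, map_mul,
      smul_eq_mul, smul_eq_mul]
    ring

lemma Wda_mk (a : WA k p) (f : k[X]) :
    Wda k p a (wmk k p f) = a * wmk k p (derivative f) := WL_mk k p a f

noncomputable abbrev wx : WA k p := wmk k p X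

@[simp] lemma Wda_x (a : WA k p) : Wda k p a (wx k p) = a := by
  rw [wx, Wda_mk]; simp

/-- a derivation of `WA` is determined by its value at `x`. -/
lemma Wda_ext {D E : Derivation k (WA k p) (WA k p)} (h : D (wx k p) = E (wx k p)) : D = E := by
  have hadj : Algebra.adjoin k ({wx k p} : Set (WA k p)) = ⊤ := by
    have := Algebra.adjoin_image k (Ideal.Quotient.mkₐ k (WittI k p)) ({X} : Set k[X])
    rw [Set.image_singleton] at this
    rw [show wx k p = (Ideal.Quotient.mkₐ k (WittI k p)) X from rfl, this, adjoin_X,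
      Algebra.map_top]
    exact (AlgHom.range_eq_top _).2 (wmk_surj k p)
  ext y
  have : y ∈ Algebra.adjoin k ({wx k p} : Set (WA k p)) := hadj ▸ trivial
  exact Derivation.eqOn_adjoin (Set.eqOn_singleton.2 h) this

lemma Wda_eq (D : Derivation k (WA k p) (WA k p)) : D = Wda k p (D (wx k p)) :=
  Wda_ext k p (by simp)

end Witt2

section Witt3
variable (k : Type*) [Field k] (p : ℕ) [Fact p.Prime] [CharP k p]

lemma Wda_add (a b : WA k p) : Wda k p (a + b) = Wda k p a + Wda k p b := by
  apply Wda_ext; simp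

lemma Wda_smul (c : k) (a : WA k p) : Wda k p (c • a) = c • Wda k p a := by
  apply Wda_ext; simp

lemma Wda_zero : Wda k p 0 = 0 := by
  apply Wda_ext; simp

lemma Wda_neg (a : WA k p) : Wda k p (-a) = - Wda k p a := by
  apply Wda_ext; simp

lemma Wda_lie (a b : WA k p) :
    ⁅Wda k p a, Wda k p b⁆ = Wda k p (Wda k p a b - Wda k p b a) := by
  apply Wda_ext
  rw [Derivation.commutator_apply]
  simp

lemma wd_mk (f : k[X]) : Wda k p 1 (wmk k p f) = wmk k p (derivative f) := by
  rw [Wda_mk, one_mul]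

end Witt3

section Witt4
variable (k : Type*) [Field k] (p : ℕ) [Fact p.Prime] [CharP k p]

lemma wmk_C (c : k) : wmk k p (C c) = algebraMap k (WA k p) c := by
  rw [← Polynomial.algebraMap_eq]
  exact (Ideal.Quotient.mkₐ k (WittI k p)).commutes c

lemma wmk_C_mul (c : k) (f : k[X]) : wmk k p (C c * f) = c • wmk k p f := by
  rw [map_mul, wmk_C, ← Algebra.smul_def]

lemma wmk_C_smul (c : k) : wmk k p (C c) = c • (1 : WA k p) := by
  rw [wmk_C, Algebra.algebraMap_eq_smul_one]

lemma cast_factorial_ne_zero {n : ℕ} (hn : n < p) : ((n.factorial : ℕ) : k) ≠ 0 := by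
  rw [Ne, CharP.cast_eq_zero_iff k p]
  intro h
  exact absurd ((Nat.Prime.dvd_factorial Fact.out).mp h) (by omega)

end Witt4

/-- Over an algebraically closed field of characteristic `p ≥ 3`, the Witt
algebra `W₁ = Der(k[X]/(X^p))` is a simple Lie algebra. -/
theorem stmt9 (k : Type*) (p : ℕ) [Field k] [IsAlgClosed k] [Fact p.Prime]
    [CharP k p] (hp : 3 ≤ p) :
    LieAlgebra.IsSimple k
      (Derivation k (k[X] ⧸ Ideal.span {(X : k[X]) ^ p})
        (k[X] ⧸ Ideal.span {(X : k[X]) ^ p})) := by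
  have hprime : p.Prime := Fact.out
  have hp0 : p ≠ 0 := by omega
  haveI : Nontrivial (WA k p) := by
    refine Ideal.Quotient.nontrivial_iff.mpr ?_
    intro htop
    have hu : IsUnit ((X : k[X]) ^ p) := by
      rw [← Ideal.span_singleton_eq_top]; exact htop
    have := Polynomial.degree_eq_zero_of_isUnit hu
    rw [degree_X_pow] at this
    exact hp0 (by exact_mod_cast this)
  constructor
  · intro I
    rw [or_iff_not_imp_left]
    intro hIbot
    -- a nonzero element of I
    obtain ⟨D, hDI, hD0⟩ : ∃ D, D ∈ I ∧ D ≠ 0 := by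
      by_contra h
      push_neg at h
      exact hIbot (LieSubmodule.eq_bot_iff I |>.2 fun m hm => h m hm)
    -- closure of I under the canonical derivative
    have hstep : ∀ a : WA k p, Wda k p a ∈ I → Wda k p (Wda k p 1 a) ∈ I := by
      intro a ha
      have h2 := LieSubmodule.lie_mem I (x := Wda k p 1) ha
      rwa [Wda_lie, Derivation.map_one_eq_zero, sub_zero] at h2
    -- step 1 : Wda 1 ∈ I
    have h1 : Wda k p 1 ∈ I := by
      have hax : D (wx k p) ≠ 0 := by
        intro h
        exact hD0 (by rw [Wda_eq k p D, h, Wda_zero])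
      obtain ⟨f, hf⟩ := wmk_surj k p (D (wx k p))
      set f₀ := f %ₘ (X ^ p) with hf₀
      have hmono : ((X : k[X]) ^ p).Monic := monic_X_pow p
      have hmk₀ : wmk k p f₀ = D (wx k p) := by
        conv_rhs => rw [← hf, ← modByMonic_add_div f (X ^ p)]
        rw [map_add, map_mul, wmk_Xp, zero_mul, add_zero]
      have hne₀ : f₀ ≠ 0 := by
        intro h; rw [h, map_zero] at hmk₀; exact hax hmk₀.symm
      have hdeg : f₀.natDegree < p := by
        have h3 := degree_modByMonic_lt f hmono
        rw [degree_X_pow] at h3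
        rw [natDegree_lt_iff_degree_lt hne₀]
        exact_mod_cast h3
      -- iterated derivatives stay in I
      have hiter : ∀ m : ℕ, Wda k p (wmk k p (derivative^[m] f₀)) ∈ I := by
        intro m
        induction m with
        | zero =>
            simp only [Function.iterate_zero_apply]
            rw [hmk₀, ← Wda_eq k p D]
            exact hDI
        | succ m ih =>
            have h4 := hstep _ ih
            rw [wd_mk] at h4
            rwa [Function.iterate_succ_apply']
      set n := f₀.natDegree with hn
      have hconst : derivative^[n] f₀ = C ((derivative^[n] f₀).coeff 0) := by
        apply eq_C_of_natDegree_le_zero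
        have := natDegree_iterate_derivative f₀ n
        omega
      set c := (derivative^[n] f₀).coeff 0 with hc
      have hcval : c = ((n.factorial : ℕ) : k) * f₀.coeff n := by
        rw [hc, coeff_iterate_derivative, zero_add, Nat.descFactorial_self, nsmul_eq_mul]
      have hc0 : c ≠ 0 := by
        rw [hcval]
        exact mul_ne_zero (cast_factorial_ne_zero k p hdeg)
          (leadingCoeff_ne_zero.mpr hne₀)
      have := hiter n
      rw [hconst, wmk_C_smul, Wda_smul] at this
      have := I.smul_mem c⁻¹ this
      rwa [smul_smul, inv_mul_cancel₀ hc0, one_smul] at this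
    -- step 2 : derivatives of everything are in I
    have hd' : ∀ f : k[X], Wda k p (wmk k p (derivative f)) ∈ I := by
      intro f
      have h2 := LieSubmodule.lie_mem I (x := Wda k p (wmk k p f)) h1
      rw [Wda_lie, Derivation.map_one_eq_zero, wd_mk, zero_sub, Wda_neg] at h2
      exact neg_mem_iff.mp h2
    -- step 3 : monomials X^m with m+1 < p
    have hmono1 : ∀ m : ℕ, m + 1 < p → Wda k p (wmk k p (X ^ m)) ∈ I := by
      intro m hm
      have hne : ((m + 1 : ℕ) : k) ≠ 0 := by
        rw [Ne, CharP.cast_eq_zero_iff k p]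
        intro h
        have := Nat.le_of_dvd (by omega) h
        omega
      have := hd' (C (((m+1 : ℕ) : k)⁻¹) * X ^ (m+1))
      rw [derivative_C_mul, derivative_X_pow] at this
      simp only [Nat.add_sub_cancel] at this
      rw [← mul_assoc, ← C_mul, inv_mul_cancel₀ hne, C_1, one_mul] at this
      exact this
    -- step 4 : all monomials
    have hXn : ∀ m : ℕ, Wda k p (wmk k p (X ^ m)) ∈ I := by
      intro m
      by_cases hm1 : m + 1 < p
      · exact hmono1 m hm1
      by_cases hm2 : p ≤ m
      · have : wmk k p (X ^ m) = 0 := by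
          rw [show m = p + (m - p) by omega, pow_add, map_mul, wmk_Xp, zero_mul]
        rw [this, Wda_zero]
        exact I.zero_mem
      · -- m = p - 1
        obtain ⟨q, hq⟩ : ∃ q, p = q + 3 := ⟨p - 3, by omega⟩
        have hm : m = q + 2 := by omega
        subst hm
        have hmem := hmono1 (q + 1) (by omega)
        have hb := LieSubmodule.lie_mem I (x := Wda k p (wmk k p (X ^ 2))) hmem
        rw [Wda_lie] at hb
        have e1 : Wda k p (wmk k p (X ^ 2)) (wmk k p (X ^ (q+1)))
            = ((q + 1 : ℕ) : k) • wmk k p (X ^ (q+2)) := by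
          rw [Wda_mk, derivative_X_pow]
          simp only [Nat.add_sub_cancel]
          rw [wmk_C_mul, mul_smul_comm, ← map_mul, ← pow_add,
            show 2 + q = q + 2 by omega]
        have e2 : Wda k p (wmk k p (X ^ (q+1))) (wmk k p (X ^ 2))
            = ((2 : ℕ) : k) • wmk k p (X ^ (q+2)) := by
          rw [Wda_mk, derivative_X_pow, wmk_C_mul, mul_smul_comm, ← map_mul, ← pow_add,
            show q + 1 + (2 - 1) = q + 2 by omega]
        have hcast : ((q + 1 : ℕ) : k) = -2 := by
          have h0 : ((q + 3 : ℕ) : k) = 0 := by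
            rw [← hq]; exact CharP.cast_eq_zero k p
          push_cast at h0 ⊢
          linear_combination h0
        have e3 : Wda k p (wmk k p (X ^ 2)) (wmk k p (X ^ (q+1)))
            - Wda k p (wmk k p (X ^ (q+1))) (wmk k p (X ^ 2))
            = (-4 : k) • wmk k p (X ^ (q+2)) := by
          rw [e1, e2, hcast, ← sub_smul]
          norm_num
        rw [e3, Wda_smul] at hb
        have h4 : (-4 : k) ≠ 0 := by
          have : ((4 : ℕ) : k) ≠ 0 := by
            rw [Ne, CharP.cast_eq_zero_iff k p]
            intro h
            have h2 : p ∣ 2 ^ 2 := by norm_num at h ⊢; exact h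
            have h5 := (Nat.Prime.dvd_of_dvd_pow hprime h2)
            have := Nat.le_of_dvd (by omega) h5
            omega
          intro h
          apply this
          push_cast
          linear_combination -h
        have := I.smul_mem (-4 : k)⁻¹ hb
        rwa [smul_smul, inv_mul_cancel₀ h4, one_smul] at this
    -- step 5 : everything is in I
    have hall : ∀ f : k[X], Wda k p (wmk k p f) ∈ I := by
      intro f
      induction f using Polynomial.induction_on' with
      | add f g hf hg => rw [map_add, Wda_add]; exact I.add_mem hf hg
      | monomial m c =>
          rw [← C_mul_X_pow_eq_monomial, wmk_C_mul, Wda_smul]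
          exact I.smul_mem c (hXn m)
    rw [eq_top_iff]
    intro E _
    obtain ⟨f, hf⟩ := wmk_surj k p (E (wx k p))
    have : E = Wda k p (wmk k p f) := by rw [hf]; exact Wda_eq k p E
    rw [this]
    exact hall f
  · intro habel
    have h := habel.trivial (Wda k p 1) (Wda k p (wx k p))
    rw [Wda_lie] at h
    have hval : Wda k p 1 (wx k p) - Wda k p (wx k p) 1 = 1 := by
      rw [Derivation.map_one_eq_zero, sub_zero, Wda_x]
    rw [hval] at h
    have := congrArg (fun D : Derivation k (WA k p) (WA k p) => D (wx k p)) h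
    simp only [Wda_x] at this
    exact one_ne_zero this
end

section
/- Let k be a field of characteristic p > 0 and n ≥ 1, and let n ⊆ Der(k[X]/(X^{p^n})) be the span of {x^j∂ : p ≤ j ≤ p^n − 1}. Then every element of n is p-nilpotent: for each f ∈ n, some iterate of the p-fold composition map f ↦ f^{∘p} applied to f is zero. -/
set_option synthInstance.maxHeartbeats 1000000
set_option maxHeartbeats 1000000

open Polynomial

section Aux

variable {k R : Type*} [CommRing k] [CommRing R] [Algebra k R]

theorem aux_span {p M : ℕ} (x : R) (D : Derivation k R R)
    (f : Derivation k R R)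
    (hf : f ∈ Submodule.span k
      {f : Derivation k R R | ∃ j : ℕ, p ≤ j ∧ j ≤ M ∧ f = x ^ j • D}) :
    ∃ g ∈ Ideal.span {x ^ p}, f = g • D := by
  induction hf using Submodule.span_induction with
  | mem f hf =>
      obtain ⟨j, hj1, _, rfl⟩ := hf
      refine ⟨x ^ j, ?_, rfl⟩
      rw [show j = p + (j - p) by omega, pow_add]
      exact Ideal.mul_mem_right _ _ (Ideal.subset_span rfl)
  | zero => exact ⟨0, zero_mem _, (zero_smul R D).symm⟩
  | add f1 f2 _ _ ih1 ih2 =>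
      obtain ⟨g1, hg1, rfl⟩ := ih1
      obtain ⟨g2, hg2, rfl⟩ := ih2
      exact ⟨g1 + g2, add_mem hg1 hg2, (add_smul g1 g2 D).symm⟩
  | smul c f _ ih =>
      obtain ⟨g, hg, rfl⟩ := ih
      exact ⟨c • g, Submodule.smul_of_tower_mem _ c hg, (smul_assoc c g D).symm⟩

theorem aux_D_mem (x : R) (D : Derivation k R R) (hD : D x = 1)
    (m : ℕ) (a : R) (ha : a ∈ Ideal.span {x} ^ (m + 1)) :
    D a ∈ Ideal.span {x} ^ m := by
  rw [Ideal.span_singleton_pow] at ha ⊢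
  obtain ⟨r, rfl⟩ := Ideal.mem_span_singleton'.1 ha
  rw [Derivation.leibniz, Derivation.leibniz_pow, hD, Nat.add_sub_cancel]
  simp only [smul_eq_mul, mul_one, nsmul_eq_mul]
  refine add_mem ?_ ?_
  · exact Ideal.mul_mem_left _ r (Ideal.mul_mem_left _ _ (Ideal.subset_span rfl))
  · refine Ideal.mul_mem_right _ _ ?_
    exact Ideal.mem_span_singleton'.2 ⟨x, (pow_succ' x m).symm⟩

theorem aux_key {p : ℕ} (hp : 2 ≤ p) (x : R) (D : Derivation k R R) (hD : D x = 1)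
    (g : R) (hg : g ∈ Ideal.span {x} ^ p)
    (i : ℕ) (a : R) (ha : a ∈ Ideal.span {x} ^ i) :
    (g • D).toLinearMap a ∈ Ideal.span {x} ^ (i + 1) := by
  have happ : (g • D).toLinearMap a = g * D a := by
    show (g • D) a = g * D a
    rw [Derivation.smul_apply, smul_eq_mul]
  rw [happ]
  match i with
  | 0 =>
      rw [pow_one]
      have hgJ : g ∈ Ideal.span {x} := by
        have := Ideal.pow_le_pow_right (I := Ideal.span {x}) (by omega : 1 ≤ p) hg
        rwa [pow_one] at this
      exact Ideal.mul_mem_right _ _ hgJ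
  | Nat.succ m =>
      have h1 : g * D a ∈ Ideal.span {x} ^ p * Ideal.span {x} ^ m :=
        Ideal.mul_mem_mul hg (aux_D_mem x D hD m a ha)
      rw [← pow_add] at h1
      exact Ideal.pow_le_pow_right (by omega) h1

theorem aux_nilpotent {p : ℕ} (hp : 2 ≤ p) (x : R) (D : Derivation k R R) (hD : D x = 1)
    (g : R) (hg : g ∈ Ideal.span {x ^ p})
    (N : ℕ) (hx0 : x ^ N = 0) :
    (g • D).toLinearMap ^ N = 0 := by
  have hgJ : g ∈ Ideal.span {x} ^ p := by rwa [Ideal.span_singleton_pow]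
  have iter : ∀ (N i : ℕ) (a : R), a ∈ Ideal.span {x} ^ i →
      ((g • D).toLinearMap ^ N) a ∈ Ideal.span {x} ^ (i + N) := by
    intro N
    induction N with
    | zero => intro i a ha; simpa using ha
    | succ N ih =>
        intro i a ha
        rw [pow_succ, Module.End.mul_apply]
        have h2 := ih (i + 1) _ (aux_key hp x D hD g hgJ i a ha)
        rwa [show i + 1 + N = i + (N + 1) by omega] at h2
  have hbot : Ideal.span {x} ^ N = ⊥ := by
    rw [Ideal.span_singleton_pow, hx0, Ideal.span_singleton_eq_bot.2 rfl]
  ext a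
  have h := iter N 0 a (by simp)
  rw [zero_add, hbot] at h
  simpa using h

end Aux

/-- Every element of the ideal `n ⊆ Der(k[X]/(X^{p^n}))` spanned by
`{x^j ∂ : p ≤ j ≤ p^n - 1}` is `p`-nilpotent: some iterate of the `p`-fold
composition map kills it. -/
theorem stmt13 (k : Type*) (p n : ℕ) [Field k] [Fact p.Prime] [CharP k p]
    (hn : 1 ≤ n)
    (D : Derivation k (k[X] ⧸ Ideal.span {(X : k[X]) ^ p ^ n})
      (k[X] ⧸ Ideal.span {(X : k[X]) ^ p ^ n}))
    (hD : D (Ideal.Quotient.mk _ X) = 1) :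
    ∀ f ∈ Submodule.span k
        {f : Derivation k (k[X] ⧸ Ideal.span {(X : k[X]) ^ p ^ n})
            (k[X] ⧸ Ideal.span {(X : k[X]) ^ p ^ n}) |
          ∃ j : ℕ, p ≤ j ∧ j ≤ p ^ n - 1 ∧
            f = (Ideal.Quotient.mk _ X : k[X] ⧸ Ideal.span {(X : k[X]) ^ p ^ n}) ^ j • D},
      ∃ m : ℕ, f.toLinearMap ^ p ^ m = 0 := by
  intro f hf
  have hp : 2 ≤ p := (Fact.out : p.Prime).two_le
  have hx0 : (Ideal.Quotient.mk (Ideal.span {(X : k[X]) ^ p ^ n}) X) ^ p ^ n = 0 := by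
    rw [← map_pow]
    exact Ideal.Quotient.eq_zero_iff_mem.2 (Ideal.subset_span rfl)
  obtain ⟨g, hg, rfl⟩ := aux_span _ D f hf
  exact ⟨n, aux_nilpotent hp _ D hD g hg _ hx0⟩
end

section
/- With B as above and g_{0,j} the derivation with g_{0,j}(u_μ) = 0 and g_{0,j}(x) = u_0 x^{jp^r+1}, the bracket formula [g_{0,i}, g_{0,j}] = (j − i) g_{0,i+j} holds (interpreting g_{0,i+j} = 0 when (i+j)p^r + 1 > p^n − 1). -/
private lemma aux_pow_mul_u {B : Type*} [Ring B] {N : ℕ} (u : ZMod N → B) (x : B) (α : ZMod N)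
    (hrel : ∀ lam, u lam * x = x * u (lam - α)) (t : ℕ) (μ : ZMod N) :
    x ^ t * u μ = u (μ + t • α) * x ^ t := by
  induction t with
  | zero => simp
  | succ t ih =>
    have hxu : x * u (μ + t • α) = u (μ + t • α + α) * x := by
      rw [hrel (μ + t • α + α)]; ring_nf
    rw [pow_succ', mul_assoc, ih, ← mul_assoc, hxu, succ_nsmul, mul_assoc, ← pow_succ',
      ← add_assoc]

private lemma aux_g_pow {B : Type*} [Ring B] {N : ℕ} (u : ZMod N → B) (x : B) (α : ZMod N)
    (hrel : ∀ lam, u lam * x = x * u (lam - α))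
    {k : Type*} [CommSemiring k] [Algebra k B] (g : B →ₗ[k] B)
    (hleib : ∀ a b, g (a * b) = g a * b + a * g b)
    (E : ℕ) (hgx : g x = u 0 * x ^ (E + 1)) (m : ℕ) :
    g (x ^ m) = (∑ t ∈ Finset.range m, u (t • α)) * x ^ (m + E) := by
  induction m with
  | zero =>
    have h1 : g 1 = 0 := by have := hleib 1 1; simpa using this
    simp [h1]
  | succ m ih =>
    have h2 : x ^ m * (u 0 * x ^ (E + 1)) = u ((m : ℕ) • α) * x ^ (m + E + 1) := by
      rw [← mul_assoc, aux_pow_mul_u u x α hrel, zero_add, mul_assoc, ← pow_add]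
      ring_nf
    have h3 : m + 1 + E = m + E + 1 := by omega
    rw [pow_succ, hleib, ih, hgx, h2, Finset.sum_range_succ, add_mul, mul_assoc, ← pow_succ, h3]

private lemma aux_sum_period {B : Type*} [Ring B] {N : ℕ} [NeZero N] (u : ZMod N → B) (α : ZMod N)
    (hα : addOrderOf α = N) (hsum : ∑ lam : ZMod N, u lam = 1) :
    ∑ t ∈ Finset.range N, u (t • α) = 1 := by
  have hinj : Function.Injective (fun t : ZMod N => t * α) := by
    intro s t hst
    have h0 : (s - t) * α = 0 := by
      simp only at hst
      rw [sub_mul, hst, sub_self]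
    have h1 : (s - t).val • α = 0 := by
      rw [nsmul_eq_mul, ZMod.natCast_rightInverse (s - t)]
      exact h0
    have h2 : addOrderOf α ∣ (s - t).val := addOrderOf_dvd_of_nsmul_eq_zero h1
    rw [hα] at h2
    have h4 : (s - t).val = 0 := Nat.eq_zero_of_dvd_of_lt h2 (ZMod.val_lt (s - t))
    have h5 : s - t = 0 := by
      have := ZMod.natCast_rightInverse (n := N) (s - t)
      rw [h4] at this
      simpa using this.symm
    exact sub_eq_zero.mp h5
  have hsurj := Finite.injective_iff_surjective.mp hinj
  obtain ⟨β, hβ⟩ := hsurj 1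
  simp only at hβ
  rw [← hsum]
  refine Finset.sum_nbij' (fun t : ℕ => (t : ZMod N) * α) (fun lam => (lam * β).val)
    (fun a _ => Finset.mem_univ _) (fun a ha => ?_) (fun a ha => ?_) (fun a _ => ?_)
    (fun a ha => ?_)
  · rw [Finset.mem_range]; exact ZMod.val_lt _
  · show (((a : ZMod N) * α) * β).val = a
    rw [mul_assoc, mul_comm α β, hβ, mul_one, ZMod.val_natCast,
      Nat.mod_eq_of_lt (Finset.mem_range.mp ha)]
  · show (((a * β).val : ℕ) : ZMod N) * α = a
    rw [ZMod.natCast_rightInverse (a * β), mul_assoc, hβ, mul_one]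
  · show u (a • α) = u ((a : ZMod N) * α)
    rw [nsmul_eq_mul]

private lemma aux_S_add {B : Type*} [Ring B] {N : ℕ} [NeZero N] (u : ZMod N → B) (α : ZMod N)
    (hα : addOrderOf α = N) (hsum : ∑ lam : ZMod N, u lam = 1) (m d : ℕ) :
    ∑ t ∈ Finset.range (m + d * N), u (t • α)
      = (∑ t ∈ Finset.range m, u (t • α)) + (d : B) := by
  induction d with
  | zero => simp
  | succ d ih =>
    have hN0 : N • α = 0 := by
      have := addOrderOf_nsmul_eq_zero α; rwa [hα] at this
    have h1 : m + (d + 1) * N = N + (m + d * N) := by ring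
    rw [h1, Finset.sum_range_add]
    have h2 : ∀ t : ℕ, (N + t) • α = t • α := by
      intro t; rw [add_nsmul, hN0, zero_add]
    simp only [h2]
    rw [ih, aux_sum_period u α hα hsum]
    push_cast
    abel

/-- In the smash product `B`, the derivations `g_{0,j}` (vanishing on all `u_μ`
with `g_{0,j}(x) = u_0 x^{j p^r + 1}`) satisfy
`[g_{0,i}, g_{0,j}] = (j - i) g_{0,i+j}` (with `g_{0,i+j} = 0` when the
exponent `(i+j) p^r + 1` exceeds `p^n - 1`, which holds automatically since
then `x^{(i+j)p^r+1} = 0`). -/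
theorem stmt17 (k B : Type*) (p r n : ℕ) [Field k] [Fact p.Prime] [CharP k p]
    (hp : 3 ≤ p) (hr : 1 ≤ r) (hrn : r ≤ n) [NeZero (p ^ r)] [Ring B] [Algebra k B]
    (u : ZMod (p ^ r) → B) (x : B) (α : ZMod (p ^ r))
    (hα : addOrderOf α = p ^ r)
    (hu : ∀ lam mu : ZMod (p ^ r), u lam * u mu = if lam = mu then u lam else 0)
    (hsum : ∑ lam : ZMod (p ^ r), u lam = 1)
    (hx : x ^ p ^ n = 0)
    (hrel : ∀ lam : ZMod (p ^ r), u lam * x = x * u (lam - α))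
    (bB : Module.Basis (ZMod (p ^ r) × Fin (p ^ n)) k B)
    (hbB : ∀ lj : ZMod (p ^ r) × Fin (p ^ n), bB lj = u lj.1 * x ^ (lj.2 : ℕ))
    (i j : ℕ) (hi : i * p ^ r + 1 ≤ p ^ n - 1) (hj : j * p ^ r + 1 ≤ p ^ n - 1)
    (gi gj gij : B →ₗ[k] B)
    (hgi : (∀ a b : B, gi (a * b) = gi a * b + a * gi b) ∧
      (∀ mu, gi (u mu) = 0) ∧ gi x = u 0 * x ^ (i * p ^ r + 1))
    (hgj : (∀ a b : B, gj (a * b) = gj a * b + a * gj b) ∧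
      (∀ mu, gj (u mu) = 0) ∧ gj x = u 0 * x ^ (j * p ^ r + 1))
    (hgij : (∀ a b : B, gij (a * b) = gij a * b + a * gij b) ∧
      (∀ mu, gij (u mu) = 0) ∧ gij x = u 0 * x ^ ((i + j) * p ^ r + 1)) :
    gi ∘ₗ gj - gj ∘ₗ gi = ((j : ℤ) - (i : ℤ)) • gij := by
  obtain ⟨giL, giU, giX⟩ := hgi
  obtain ⟨gjL, gjU, gjX⟩ := hgj
  obtain ⟨gijL, gijU, gijX⟩ := hgij
  have hgi_pow : ∀ m : ℕ, gi (x ^ m)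
      = (∑ t ∈ Finset.range m, u (t • α)) * x ^ (m + i * p ^ r) :=
    fun m => aux_g_pow u x α hrel gi giL (i * p ^ r) giX m
  have hgj_pow : ∀ m : ℕ, gj (x ^ m)
      = (∑ t ∈ Finset.range m, u (t • α)) * x ^ (m + j * p ^ r) :=
    fun m => aux_g_pow u x α hrel gj gjL (j * p ^ r) gjX m
  have hgij_pow : ∀ m : ℕ, gij (x ^ m)
      = (∑ t ∈ Finset.range m, u (t • α)) * x ^ (m + (i + j) * p ^ r) :=
    fun m => aux_g_pow u x α hrel gij gijL ((i + j) * p ^ r) gijX m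
  have hgS : ∀ (g : B →ₗ[k] B), (∀ μ, g (u μ) = 0) →
      ∀ M : ℕ, g (∑ t ∈ Finset.range M, u (t • α)) = 0 := by
    intro g hg M
    rw [map_sum]
    simp [hg]
  have hmulu : ∀ (g : B →ₗ[k] B), (∀ a b : B, g (a * b) = g a * b + a * g b) →
      (∀ μ, g (u μ) = 0) → ∀ (μ : ZMod (p ^ r)) (c : B), g (u μ * c) = u μ * g c := by
    intro g L U μ c
    rw [L, U, zero_mul, zero_add]
  have main : ∀ m : ℕ,
      gi (gj (x ^ m)) - gj (gi (x ^ m)) = ((j : ℤ) - (i : ℤ)) • gij (x ^ m) := by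
    intro m
    rw [hgj_pow m, hgi_pow m, giL, gjL, hgS gi giU, hgS gj gjU, zero_mul, zero_add,
      zero_mul, zero_add, hgi_pow (m + j * p ^ r), hgj_pow (m + i * p ^ r),
      aux_S_add u α hα hsum m j, aux_S_add u α hα hsum m i, hgij_pow m]
    have e1 : m + j * p ^ r + i * p ^ r = m + (i + j) * p ^ r := by ring
    have e2 : m + i * p ^ r + j * p ^ r = m + (i + j) * p ^ r := by ring
    rw [e1, e2]
    set S := ∑ t ∈ Finset.range m, u (t • α) with hSdef
    set X := x ^ (m + (i + j) * p ^ r) with hXdef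
    have hz : ((j : ℤ) - (i : ℤ)) • (S * X) = ((j : B) - (i : B)) * (S * X) := by
      rw [zsmul_eq_mul]
      push_cast
      rfl
    have h5j : S * ((j : B) * X) = (j : B) * (S * X) := by
      rw [← mul_assoc, ← (Nat.cast_commute j S).eq, mul_assoc]
    have h5i : S * ((i : B) * X) = (i : B) * (S * X) := by
      rw [← mul_assoc, ← (Nat.cast_commute i S).eq, mul_assoc]
    rw [hz, add_mul, add_mul, mul_add, mul_add, h5j, h5i, sub_mul]
    abel
  refine bB.ext fun lj => ?_
  rw [hbB]
  simp only [LinearMap.sub_apply, LinearMap.comp_apply, LinearMap.smul_apply,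
    hmulu gi giL giU, hmulu gj gjL gjU, hmulu gij gijL gijU]
  rw [← mul_sub, main (lj.2 : ℕ), mul_smul_comm]
end

section
/- Let k be a field of characteristic p ≥ 3 and let A be the path algebra of the Kronecker quiver over k (two vertices 1, 2 and two arrows from 1 to 2), and T(A) = A ⋉ A* the trivial extension algebra, with multiplication (a,f)(b,g) = (ab, a·g + f·b) where A* carries the natural A-A-bimodule structure. Then the map d : T(A) → T(A), (a,f) ↦ (0,f), is a derivation of T(A) satisfying d^{∘p} = d, and d is not an inner derivation. -/
/-- Let `A` be the Kronecker algebra (path algebra of the quiver with two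
vertices `e₁, e₂` and two parallel arrows `a₁, a₂` from vertex 1 to vertex 2)
over a field `k` of characteristic `p ≥ 3`, and let `T ≅ A ⊕ A*` be the trivial
extension `T(A) = A ⋉ A*`, with multiplication `(a,f)(b,g) = (ab, a·g + f·b)`
where `(a·g)(b') = g(b' a)` and `(f·b)(a') = f(b a')`. Then the projection
`d : (a,f) ↦ (0,f)` is a derivation of `T` with `d^{∘p} = d`, and `d` is not an
inner derivation. -/
theorem stmt19 (k A T : Type*) (p : ℕ) [Field k] [Fact p.Prime] [CharP k p]
    (hp : 3 ≤ p) [Ring A] [Algebra k A] [Ring T] [Algebra k T]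
    -- A is the Kronecker algebra:
    (e1 e2 a1 a2 : A)
    (hone : e1 + e2 = 1) (he1 : e1 * e1 = e1) (he2 : e2 * e2 = e2)
    (he12 : e1 * e2 = 0) (he21 : e2 * e1 = 0)
    (ha1 : e2 * a1 * e1 = a1) (ha2 : e2 * a2 * e1 = a2)
    (hzero : ∀ y z : A, y ∈ ({a1, a2} : Set A) → z ∈ ({a1, a2} : Set A) → y * z = 0)
    (bA : Module.Basis (Fin 4) k A)
    (hbA : bA 0 = e1 ∧ bA 1 = e2 ∧ bA 2 = a1 ∧ bA 3 = a2)
    -- T is the trivial extension A ⋉ A*: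
    (e : T ≃ₗ[k] A × Module.Dual k A)
    (hmul : ∀ s t : T,
      e (s * t) = ((e s).1 * (e t).1,
        (e t).2 ∘ₗ LinearMap.mulRight k (e s).1 + (e s).2 ∘ₗ LinearMap.mulLeft k (e t).1))
    -- the projection d : (a, f) ↦ (0, f):
    (d : Module.End k T)
    (hd : d = e.symm.toLinearMap ∘ₗ
      (LinearMap.prod 0 (LinearMap.snd k A (Module.Dual k A))) ∘ₗ e.toLinearMap) :
    (∀ s t : T, d (s * t) = d s * t + s * d t) ∧
    d ^ p = d ∧
    ¬ ∃ z : T, ∀ t : T, d t = z * t - t * z := by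
  have key : ∀ t : T, e (d t) = (0, (e t).2) := by
    intro t
    simp [hd, LinearMap.prod_apply]
  have hder : ∀ s t : T, d (s * t) = d s * t + s * d t := by
    intro s t
    apply e.injective
    rw [map_add, key, hmul, hmul, hmul, key, key]
    ext x
    · simp [add_comm]
    · simp [add_comm]
  refine ⟨hder, ?_, ?_⟩
  · have d2 : d * d = d := by
      ext t
      apply e.injective
      show e (d (d t)) = e (d t)
      rw [key, key]
    have hpow : ∀ n : ℕ, d ^ (n + 1) = d := by
      intro n
      induction n with
      | zero => simp
      | succ m ih => rw [pow_succ, ih, d2]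
    obtain ⟨m, rfl⟩ : ∃ m, p = m + 1 := ⟨p - 1, by omega⟩
    exact hpow m
  · rintro ⟨z, hz⟩
    have hf : ∀ f : Module.Dual k A, f 1 = 0 := by
      intro f
      set t := e.symm (0, f) with ht
      have het : e t = (0, f) := by simp [ht]
      have := hz t
      apply_fun e at this
      rw [key, het, map_sub, hmul, hmul, het] at this
      have h2 := congrArg Prod.snd this
      simp only [Prod.snd_sub] at h2
      have := congrFun (congrArg DFunLike.coe h2) 1
      simpa using this
    haveI : Nontrivial A := nontrivial_of_ne (bA 0) 0 (bA.ne_zero 0)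
    have : (1 : A) = 0 := (Module.forall_dual_apply_eq_zero_iff k (1 : A)).mp hf
    exact one_ne_zero this
end
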